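/- arXiv:1702.04603 — 6 statements merged into one kernel-verified Lean document; each statement's English description precedes it below -/
import Mathlib

section
/- Let X be a type, R a ternary relation on X that is relationally associative, and Q a quantale. Then relational convolution is associative: (f ∗_R g) ∗_R h = f ∗_R (g ∗_R h) for all f, g, h : X → Q. -/
/-!
Distributing `*` over the suprema turns each side into one supremum of `f u * g v * h w` over
triples `(u, v, w)`: on the left over the triples with `∃ y, R y u v ∧ R x y w`, on the right over
those with `∃ z, R z v w ∧ R x u z`. Relational associativity says these index sets agree, and
associativity of `*` matches the summands.
-/

section Distrib

variable {Q : Type*} [CompleteLattice Q] [Mul Q]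

theorem iSup_mul_of_sSup_mul (hdistl : ∀ (A : Set Q) (b : Q), sSup A * b = ⨆ a ∈ A, a * b)
    {ι : Sort*} (a : ι → Q) (b : Q) : (⨆ i, a i) * b = ⨆ i, a i * b := by
  rw [iSup, hdistl, iSup_range]

theorem mul_iSup_of_mul_sSup (hdistr : ∀ (a : Q) (B : Set Q), a * sSup B = ⨆ b ∈ B, a * b)
    {ι : Sort*} (a : Q) (b : ι → Q) : a * (⨆ i, b i) = ⨆ i, a * b i := by
  rw [iSup, hdistr, iSup_range]

end Distrib

/-- Relational convolution: `(f ∗_R g) x = ⨆ {f y * g z | R x y z}`. -/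
def rconv {X Q : Type*} [CompleteLattice Q] [Mul Q]
    (R : X → X → X → Prop) (f g : X → Q) : X → Q :=
  fun x => ⨆ (y) (z) (_ : R x y z), f y * g z

section TripleConvolution

variable {X Q : Type*} [CompleteLattice Q] [Mul Q] (R : X → X → X → Prop) (f g h : X → Q)

theorem rconv_rconv_left_apply
    (hdistl : ∀ (A : Set Q) (b : Q), sSup A * b = ⨆ a ∈ A, a * b) (x : X) :
    rconv R (rconv R f g) h x =
      ⨆ (u) (v) (w) (_ : ∃ y, R y u v ∧ R x y w), f u * g v * h w := by
  simp only [rconv, iSup_mul_of_sSup_mul hdistl, iSup_exists, iSup_and]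
  apply le_antisymm
  · exact iSup₂_le fun y w => iSup_le fun hyw => iSup₂_le fun u v => iSup_le fun huv =>
      le_iSup₂_of_le u v <| le_iSup₂_of_le w y <| le_iSup₂_of_le huv hyw le_rfl
  · exact iSup₂_le fun u v => iSup₂_le fun w y => iSup₂_le fun huv hyw =>
      le_iSup₂_of_le y w <| le_iSup_of_le hyw <| le_iSup₂_of_le u v <| le_iSup_of_le huv le_rfl

theorem rconv_rconv_right_apply
    (hdistr : ∀ (a : Q) (B : Set Q), a * sSup B = ⨆ b ∈ B, a * b) (x : X) :
    rconv R f (rconv R g h) x =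
      ⨆ (u) (v) (w) (_ : ∃ z, R z v w ∧ R x u z), f u * (g v * h w) := by
  simp only [rconv, mul_iSup_of_mul_sSup hdistr, iSup_exists, iSup_and]
  apply le_antisymm
  · exact iSup₂_le fun u z => iSup_le fun huz => iSup₂_le fun v w => iSup_le fun hvw =>
      le_iSup₂_of_le u v <| le_iSup₂_of_le w z <| le_iSup₂_of_le hvw huz le_rfl
  · exact iSup₂_le fun u v => iSup₂_le fun w z => iSup₂_le fun hvw huz =>
      le_iSup₂_of_le u z <| le_iSup_of_le huz <| le_iSup₂_of_le v w <| le_iSup_of_le hvw le_rfl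

end TripleConvolution

theorem rconv_assoc {X Q : Type*} [CompleteLattice Q] [Mul Q]
    (mul_assoc : ∀ a b c : Q, a * b * c = a * (b * c))
    (hdistl : ∀ (A : Set Q) (b : Q), sSup A * b = ⨆ a ∈ A, a * b)
    (hdistr : ∀ (a : Q) (B : Set Q), a * sSup B = ⨆ b ∈ B, a * b)
    (R : X → X → X → Prop)
    (rel_assoc : ∀ x u v w,
      (∃ y, R y u v ∧ R x y w) ↔ (∃ z, R z v w ∧ R x u z))
    (f g h : X → Q) :
    rconv R (rconv R f g) h = rconv R f (rconv R g h) := by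
  funext x
  rw [rconv_rconv_left_apply R f g h hdistl, rconv_rconv_right_apply R f g h hdistr]
  simp only [rel_assoc, mul_assoc]
end

section
/- Let (X, R, ξ) be a relational monoid and Q a unital quantale. Define id : X → Q by id x = 1 if x ∈ ξ and id x = ⊥ otherwise. Then the function space X → Q, with the pointwise complete lattice structure and relational convolution ∗_R as multiplication, is a unital quantale: ∗_R is associative; id ∗_R f = f = f ∗_R id for all f : X → Q; and (⨆_{f ∈ F} f) ∗_R g = ⨆_{f ∈ F} (f ∗_R g) and f ∗_R (⨆_{g ∈ G} g) = ⨆_{g ∈ G} (f ∗_R g) for all sets F, G of functions X → Q. -/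
open scoped Classical

/-! Multiplication in `Q` distributes over suprema, so `((f ∗ g) ∗ h) x` is the supremum of
`f u * g v * h w` over the triples with `x ∈ (u ⬝ v) ⬝ w`, and `(f ∗ (g ∗ h)) x` the same supremum
over `x ∈ u ⬝ (v ⬝ w)`; relational associativity says that these index sets coincide. In
`(id ∗ f) x` every term `id e * f y` with `e ∉ ξ` is `⊥`, and `e ∈ ξ` forces `y = x`. -/

/-- `R x y z` reads `x ∈ y ⬝ z`. -/
def RelAssociative {X : Type*} (R : X → X → X → Prop) : Prop :=
  ∀ x u v w, (∃ y, R y u v ∧ R x y w) ↔ (∃ z, R z v w ∧ R x u z)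

noncomputable def rconvUnit {X Q : Type*} [CompleteLattice Q] [One Q] (ξ : Set X) : X → Q :=
  fun x => if x ∈ ξ then 1 else ⊥

section Quantale

variable {Q : Type*} [Semigroup Q] [CompleteLattice Q] [IsQuantale Q]

theorem iSup_mul_distrib' {ι : Sort*} (f : ι → Q) (a : Q) : (⨆ i, f i) * a = ⨆ i, f i * a := by
  rw [← sSup_range, sSup_mul_distrib, iSup_range]

theorem mul_iSup_distrib' {ι : Sort*} (a : Q) (f : ι → Q) : a * (⨆ i, f i) = ⨆ i, a * f i := by
  rw [← sSup_range, mul_sSup_distrib, iSup_range]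

end Quantale

section Convolution

variable {X : Type*} (R : X → X → X → Prop)

theorem rconv_le {Q : Type*} [CompleteLattice Q] [Mul Q] {f g : X → Q} {x : X} {a : Q}
    (h : ∀ y z, R x y z → f y * g z ≤ a) : rconv R f g x ≤ a :=
  iSup₂_le fun y z => iSup_le (h y z)

theorem le_rconv {Q : Type*} [CompleteLattice Q] [Mul Q] {f g : X → Q} {x y z : X}
    (h : R x y z) : f y * g z ≤ rconv R f g x :=
  le_iSup₂_of_le y z <| le_iSup_of_le h le_rfl

variable {Q : Type*} [Semigroup Q] [CompleteLattice Q] [IsQuantale Q]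

theorem rconv_rconv_apply_left (f g h : X → Q) (x : X) :
    rconv R (rconv R f g) h x =
      ⨆ (u) (v) (w) (_ : ∃ y, R y u v ∧ R x y w), f u * g v * h w := by
  simp only [rconv, iSup_mul_distrib']
  apply le_antisymm
  · exact iSup₂_le fun y w => iSup_le fun hxyw => iSup₂_le fun u v => iSup_le fun hyuv =>
      le_iSup₂_of_le u v <| le_iSup₂_of_le w ⟨y, hyuv, hxyw⟩ le_rfl
  · exact iSup₂_le fun u v => iSup₂_le fun w ⟨y, hyuv, hxyw⟩ =>
      le_iSup₂_of_le y w <| le_iSup₂_of_le hxyw u <| le_iSup₂_of_le v hyuv le_rfl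

theorem rconv_rconv_apply_right (f g h : X → Q) (x : X) :
    rconv R f (rconv R g h) x =
      ⨆ (u) (v) (w) (_ : ∃ z, R z v w ∧ R x u z), f u * (g v * h w) := by
  simp only [rconv, mul_iSup_distrib']
  apply le_antisymm
  · exact iSup₂_le fun u z => iSup_le fun hxuz => iSup₂_le fun v w => iSup_le fun hzvw =>
      le_iSup₂_of_le u v <| le_iSup₂_of_le w ⟨z, hzvw, hxuz⟩ le_rfl
  · exact iSup₂_le fun u v => iSup₂_le fun w ⟨z, hzvw, hxuz⟩ =>
      le_iSup₂_of_le u z <| le_iSup₂_of_le hxuz v <| le_iSup₂_of_le w hzvw le_rfl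

theorem rconv_assoc_s9 (hR : RelAssociative R) (f g h : X → Q) :
    rconv R (rconv R f g) h = rconv R f (rconv R g h) := by
  funext x
  simp only [rconv_rconv_apply_left, rconv_rconv_apply_right, hR x, mul_assoc]

theorem iSup_rconv {ι : Sort*} (f : ι → X → Q) (g : X → Q) :
    rconv R (⨆ i, f i) g = ⨆ i, rconv R (f i) g := by
  funext x
  simp only [rconv, iSup_apply, iSup_mul_distrib']
  simp_rw [@iSup_comm _ ι]

theorem rconv_iSup {ι : Sort*} (f : X → Q) (g : ι → X → Q) :
    rconv R f (⨆ i, g i) = ⨆ i, rconv R f (g i) := by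
  funext x
  simp only [rconv, iSup_apply, mul_iSup_distrib']
  simp_rw [@iSup_comm _ ι]

theorem sSup_rconv (F : Set (X → Q)) (g : X → Q) :
    rconv R (sSup F) g = ⨆ f ∈ F, rconv R f g := by
  simp_rw [sSup_eq_iSup, iSup_rconv]

theorem rconv_sSup (f : X → Q) (G : Set (X → Q)) :
    rconv R f (sSup G) = ⨆ g ∈ G, rconv R f g := by
  simp_rw [sSup_eq_iSup, rconv_iSup]

end Convolution

section Unit

variable {X Q : Type*} [Monoid Q] [CompleteLattice Q] [IsQuantale Q]
  (R : X → X → X → Prop) (ξ : Set X)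

theorem rconvUnit_rconv (hul : ∀ x, ∃ e ∈ ξ, R x e x) (hcl : ∀ x y, ∀ e ∈ ξ, R x e y → x = y)
    (f : X → Q) : rconv R (rconvUnit ξ) f = f := by
  funext x
  apply le_antisymm
  · refine rconv_le R fun e y hxey => ?_
    by_cases he : e ∈ ξ
    · rw [rconvUnit, if_pos he, one_mul, hcl x y e he hxey]
    · rw [rconvUnit, if_neg he, Quantale.bot_mul]
      exact bot_le
  · obtain ⟨e, he, hxex⟩ := hul x
    calc f x = rconvUnit ξ e * f x := by rw [rconvUnit, if_pos he, one_mul]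
      _ ≤ rconv R (rconvUnit ξ) f x := le_rconv R hxex

theorem rconv_rconvUnit (hur : ∀ x, ∃ e ∈ ξ, R x x e)
    (hcr : ∀ x y, ∀ e ∈ ξ, R x y e → x = y) (f : X → Q) : rconv R f (rconvUnit ξ) = f := by
  funext x
  apply le_antisymm
  · refine rconv_le R fun y e hxye => ?_
    by_cases he : e ∈ ξ
    · rw [rconvUnit, if_pos he, mul_one, hcr x y e he hxye]
    · rw [rconvUnit, if_neg he, Quantale.mul_bot]
      exact bot_le
  · obtain ⟨e, he, hxxe⟩ := hur x
    calc f x = f x * rconvUnit ξ e := by rw [rconvUnit, if_pos he, mul_one]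
      _ ≤ rconv R f (rconvUnit ξ) x := le_rconv R hxxe

end Unit

theorem rel_monoid_lifting {X Q : Type*} [CompleteLattice Q] [Mul Q] [One Q]
    (mul_assoc : ∀ a b c : Q, a * b * c = a * (b * c))
    (one_mul : ∀ a : Q, 1 * a = a) (mul_one : ∀ a : Q, a * 1 = a)
    (hdistl : ∀ (A : Set Q) (b : Q), sSup A * b = ⨆ a ∈ A, a * b)
    (hdistr : ∀ (a : Q) (B : Set Q), a * sSup B = ⨆ b ∈ B, a * b)
    (R : X → X → X → Prop) (ξ : Set X)
    (rel_assoc : ∀ x u v w,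
      (∃ y, R y u v ∧ R x y w) ↔ (∃ z, R z v w ∧ R x u z))
    (hul : ∀ x, ∃ e ∈ ξ, R x e x) (hur : ∀ x, ∃ e ∈ ξ, R x x e)
    (hcl : ∀ x y, ∀ e ∈ ξ, R x e y → x = y)
    (hcr : ∀ x y, ∀ e ∈ ξ, R x y e → x = y) :
    (∀ f g h : X → Q, rconv R (rconv R f g) h = rconv R f (rconv R g h)) ∧
    (∀ f : X → Q,
      rconv R (fun x => if x ∈ ξ then (1 : Q) else ⊥) f = f ∧
      rconv R f (fun x => if x ∈ ξ then (1 : Q) else ⊥) = f) ∧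
    (∀ (F : Set (X → Q)) (g : X → Q), rconv R (sSup F) g = ⨆ f ∈ F, rconv R f g) ∧
    (∀ (f : X → Q) (G : Set (X → Q)), rconv R f (sSup G) = ⨆ g ∈ G, rconv R f g) := by
  let _ : Monoid Q := { ‹Mul Q›, ‹One Q› with mul_assoc, one_mul, mul_one }
  have : IsQuantale Q := ⟨hdistr, hdistl⟩
  exact ⟨rconv_assoc_s9 R rel_assoc, fun f => ⟨rconvUnit_rconv R ξ hul hcl f,
    rconv_rconvUnit R ξ hur hcr f⟩, sSup_rconv R, rconv_sSup R⟩
end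

section
/- Let (S, ·, D) be a partial semigroup and define the ternary relation R on S by R x y z ↔ D y z ∧ x = y · z. Then R is relationally associative, i.e. (S, R) is a relational semigroup. If moreover (S, ·, D, E) is a partial monoid, then (S, R, E) is a relational monoid. -/
/-- Partial semigroup axioms for a binary operation `mul` with domain of definition `D`. -/
def IsPartialSemigroup {S : Type*} (mul : S → S → S) (D : S → S → Prop) : Prop :=
  (∀ x y z : S, (D y z ∧ D x (mul y z)) ↔ (D x y ∧ D (mul x y) z)) ∧
  (∀ x y z : S, D x y → D (mul x y) z → mul (mul x y) z = mul x (mul y z))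

/-- Partial monoid axioms. -/
def IsPartialMonoid {S : Type*} (mul : S → S → S) (D : S → S → Prop) (E : Set S) : Prop :=
  IsPartialSemigroup mul D ∧
  (∀ x : S, ∃ e ∈ E, D e x ∧ mul e x = x) ∧
  (∀ x : S, ∃ e ∈ E, D x e ∧ mul x e = x) ∧
  (∀ e₁ ∈ E, ∀ e₂ ∈ E, D e₁ e₂ → e₁ = e₂)

/-- Relational associativity of a ternary relation. -/
def RelAssoc {S : Type*} (R : S → S → S → Prop) : Prop :=
  ∀ x u v w : S, (∃ y, R y u v ∧ R x y w) ↔ (∃ z, R z v w ∧ R x u z)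

/-- Relational monoid axioms for a ternary relation `R` with unit set `ξ`. -/
def IsRelMonoid {S : Type*} (R : S → S → S → Prop) (ξ : Set S) : Prop :=
  RelAssoc R ∧
  (∀ x : S, ∃ e ∈ ξ, R x e x) ∧
  (∀ x : S, ∃ e ∈ ξ, R x x e) ∧
  (∀ x y : S, ∀ e ∈ ξ, R x e y → x = y) ∧
  (∀ x y : S, ∀ e ∈ ξ, R x y e → x = y)

/-! Relational associativity of the graph `R x y z ↔ D y z ∧ x = y · z` is the domain axiom
together with the associativity law. For units, the key fact is that a unit `e` composable with `y` must be the left unit of `y` supplied by the monoid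
axioms: if `e' · y = y` then `D e (e' · y)` forces `D e e'`, hence `e = e'`. -/

namespace IsPartialSemigroup

def graph {S : Type*} (mul : S → S → S) (D : S → S → Prop) (x y z : S) : Prop :=
  D y z ∧ x = mul y z

variable {S : Type*} {mul : S → S → S} {D : S → S → Prop}

theorem relAssoc_graph (h : IsPartialSemigroup mul D) : RelAssoc (graph mul D) := by
  obtain ⟨hdom, hassoc⟩ := h
  intro x u v w
  constructor
  · rintro ⟨y, ⟨huv, rfl⟩, hyw, rfl⟩
    obtain ⟨hvw, hu_vw⟩ := (hdom u v w).mpr ⟨huv, hyw⟩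
    exact ⟨mul v w, ⟨hvw, rfl⟩, hu_vw, hassoc u v w huv hyw⟩
  · rintro ⟨z, ⟨hvw, rfl⟩, huz, rfl⟩
    obtain ⟨huv, huv_w⟩ := (hdom u v w).mp ⟨hvw, huz⟩
    exact ⟨mul u v, ⟨huv, rfl⟩, huv_w, (hassoc u v w huv huv_w).symm⟩

end IsPartialSemigroup

namespace IsPartialMonoid

open IsPartialSemigroup

variable {S : Type*} {mul : S → S → S} {D : S → S → Prop} {E : Set S}

theorem mul_eq_of_mem_left (h : IsPartialMonoid mul D E) {e y : S} (he : e ∈ E) (hey : D e y) :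
    mul e y = y := by
  obtain ⟨⟨hdom, -⟩, hleft, -, hunique⟩ := h
  obtain ⟨e', he', he'y, hmul⟩ := hleft y
  have hee' : D e e' := ((hdom e e' y).mp ⟨he'y, by rwa [hmul]⟩).1
  rw [hunique e he e' he' hee', hmul]

theorem mul_eq_of_mem_right (h : IsPartialMonoid mul D E) {e y : S} (he : e ∈ E) (hye : D y e) :
    mul y e = y := by
  obtain ⟨⟨hdom, -⟩, -, hright, hunique⟩ := h
  obtain ⟨e', he', hye', hmul⟩ := hright y
  have he'e : D e' e := ((hdom y e' e).mpr ⟨hye', by rwa [hmul]⟩).1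
  rw [← hunique e' he' e he he'e, hmul]

theorem isRelMonoid_graph (h : IsPartialMonoid mul D E) : IsRelMonoid (graph mul D) E := by
  refine ⟨h.1.relAssoc_graph, fun x => ?_, fun x => ?_, ?_, ?_⟩
  · obtain ⟨e, he, hex, hmul⟩ := h.2.1 x
    exact ⟨e, he, hex, hmul.symm⟩
  · obtain ⟨e, he, hxe, hmul⟩ := h.2.2.1 x
    exact ⟨e, he, hxe, hmul.symm⟩
  · rintro _ y e he ⟨hey, rfl⟩
    exact h.mul_eq_of_mem_left he hey
  · rintro _ y e he ⟨hye, rfl⟩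
    exact h.mul_eq_of_mem_right he hye

end IsPartialMonoid

theorem partial_semigroup_to_relational {S : Type*}
    (mul : S → S → S) (D : S → S → Prop) (E : Set S)
    (hsg : IsPartialSemigroup mul D) :
    RelAssoc (fun x y z => D y z ∧ x = mul y z) ∧
    (IsPartialMonoid mul D E →
      IsRelMonoid (fun x y z => D y z ∧ x = mul y z) E) :=
  ⟨hsg.relAssoc_graph, IsPartialMonoid.isRelMonoid_graph⟩
end

section
/- Let (S, ⊙, D_⊙) and (T, ⊕, D_⊕) be partial semigroups, and let ∘ with domain D_∘ : S → T → Prop be a left action of S on T, i.e.: (D_⊙ s₁ s₂ ∧ D_∘ (s₁ ⊙ s₂) t) ↔ (D_∘ s₂ t ∧ D_∘ s₁ (s₂ ∘ t)); D_⊙ s₁ s₂ ∧ D_∘ (s₁ ⊙ s₂) t → s₁ ∘ (s₂ ∘ t) = (s₁ ⊙ s₂) ∘ t; (D_⊕ t₁ t₂ ∧ D_∘ s (t₁ ⊕ t₂)) ↔ (D_∘ s t₁ ∧ D_∘ s t₂ ∧ D_⊕ (s ∘ t₁) (s ∘ t₂)); and D_⊕ t₁ t₂ ∧ D_∘ s (t₁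 ⊕ t₂) → (s ∘ t₁) ⊕ (s ∘ t₂) = s ∘ (t₁ ⊕ t₂). Define on S × T: D_⋉ (s₁, t₁) (s₂, t₂) ↔ D_⊙ s₁ s₂ ∧ D_∘ s₁ t₂ ∧ D_⊕ t₁ (s₁ ∘ t₂), and (s₁, t₁) ⋉ (s₂, t₂) = (s₁ ⊙ s₂, t₁ ⊕ (s₁ ∘ t₂)). Then (S × T, ⋉, D_⋉) is a partial semigroup. If moreover S and T are partial monoids with unit sets E_⊙ and E_⊕, and the action satisfies e ∈ E_⊙ → D_∘ e t ∧ e ∘ t = t for all t, and e ∈ E_⊕ → D_∘ s e ∧ s ∘ e = e for all s, then (S × T, ⋉, D_⋉, E_⊙ × E_⊕) is a partial monoid. -/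
/-- Semidirect product composition. -/
def sdMul {S T : Type*} (smul : S → S → S) (tmul : T → T → T) (act : S → T → T)
    (p q : S × T) : S × T :=
  (smul p.1 q.1, tmul p.2 (act p.1 q.2))

/-- Domain of definition of the semidirect product composition. -/
def sdD {S T : Type*} (Ds : S → S → Prop) (Dt : T → T → Prop) (Da : S → T → Prop)
    (act : S → T → T) (p q : S × T) : Prop :=
  Ds p.1 q.1 ∧ Da p.1 q.2 ∧ Dt p.2 (act p.1 q.2)

/-! The domain and associativity conditions on `S × T` split into an `S`-part, which is the
partial-semigroup axiom of `S`, and a `T`-part, in which the action axioms let `s ∘ -` be pushed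
through `⊕` so that the partial-semigroup axiom of `T` applies. Units are pairs of units, since
units of `S` act trivially and units of `T` are fixed by the action. -/

section SemidirectProduct

variable {S T : Type*} {smul : S → S → S} {Ds : S → S → Prop} {tmul : T → T → T}
  {Dt : T → T → Prop} {act : S → T → T} {Da : S → T → Prop}

theorem dom_tmul_act_tmul_iff (hT : IsPartialSemigroup tmul Dt)
    (ha3 : ∀ s t₁ t₂, (Dt t₁ t₂ ∧ Da s (tmul t₁ t₂)) ↔
      (Da s t₁ ∧ Da s t₂ ∧ Dt (act s t₁) (act s t₂)))
    (ha4 : ∀ s t₁ t₂, Dt t₁ t₂ → Da s (tmul t₁ t₂) →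
      tmul (act s t₁) (act s t₂) = act s (tmul t₁ t₂))
    (s : S) (t₁ t₂ u : T) :
    (Dt t₂ u ∧ Da s (tmul t₂ u) ∧ Dt t₁ (act s (tmul t₂ u))) ↔
      (Da s t₂ ∧ Da s u ∧ Dt t₁ (act s t₂) ∧ Dt (tmul t₁ (act s t₂)) (act s u)) := by
  constructor
  · rintro ⟨h₂u, hs, h₁⟩
    obtain ⟨hs₂, hsu, hD⟩ := (ha3 s t₂ u).mp ⟨h₂u, hs⟩
    rw [← ha4 s t₂ u h₂u hs] at h₁
    exact ⟨hs₂, hsu, (hT.1 _ _ _).mp ⟨hD, h₁⟩⟩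
  · rintro ⟨hs₂, hsu, h₁, h₁₂⟩
    obtain ⟨hD, h₁'⟩ := (hT.1 _ _ _).mpr ⟨h₁, h₁₂⟩
    obtain ⟨h₂u, hs⟩ := (ha3 s t₂ u).mpr ⟨hs₂, hsu, hD⟩
    exact ⟨h₂u, hs, ha4 s t₂ u h₂u hs ▸ h₁'⟩

theorem tmul_act_tmul_assoc (hT : IsPartialSemigroup tmul Dt)
    (ha3 : ∀ s t₁ t₂, (Dt t₁ t₂ ∧ Da s (tmul t₁ t₂)) ↔
      (Da s t₁ ∧ Da s t₂ ∧ Dt (act s t₁) (act s t₂)))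
    (ha4 : ∀ s t₁ t₂, Dt t₁ t₂ → Da s (tmul t₁ t₂) →
      tmul (act s t₁) (act s t₂) = act s (tmul t₁ t₂))
    {s : S} {t₁ t₂ u : T} (h₂u : Dt t₂ u) (hs : Da s (tmul t₂ u))
    (h₁ : Dt t₁ (act s (tmul t₂ u))) :
    tmul (tmul t₁ (act s t₂)) (act s u) = tmul t₁ (act s (tmul t₂ u)) := by
  obtain ⟨-, -, h₁₂, h₁₂u⟩ := (dom_tmul_act_tmul_iff hT ha3 ha4 s t₁ t₂ u).mp ⟨h₂u, hs, h₁⟩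
  rw [hT.2 _ _ _ h₁₂ h₁₂u, ha4 s t₂ u h₂u hs]

variable (ha1 : ∀ s₁ s₂ t, (Ds s₁ s₂ ∧ Da (smul s₁ s₂) t) ↔ (Da s₂ t ∧ Da s₁ (act s₂ t)))
    (ha2 : ∀ s₁ s₂ t, Ds s₁ s₂ → Da (smul s₁ s₂) t →
      act s₁ (act s₂ t) = act (smul s₁ s₂) t)
    (ha3 : ∀ s t₁ t₂, (Dt t₁ t₂ ∧ Da s (tmul t₁ t₂)) ↔
      (Da s t₁ ∧ Da s t₂ ∧ Dt (act s t₁) (act s t₂)))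
    (ha4 : ∀ s t₁ t₂, Dt t₁ t₂ → Da s (tmul t₁ t₂) →
      tmul (act s t₁) (act s t₂) = act s (tmul t₁ t₂))
include ha1 ha2 ha3 ha4

theorem sdD_assoc_iff (hS : IsPartialSemigroup smul Ds) (hT : IsPartialSemigroup tmul Dt)
    (p q r : S × T) :
    (sdD Ds Dt Da act q r ∧ sdD Ds Dt Da act p (sdMul smul tmul act q r)) ↔
      (sdD Ds Dt Da act p q ∧ sdD Ds Dt Da act (sdMul smul tmul act p q) r) := by
  obtain ⟨s₁, t₁⟩ := p
  obtain ⟨s₂, t₂⟩ := q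
  obtain ⟨s₃, t₃⟩ := r
  simp only [sdD, sdMul]
  have hT' := dom_tmul_act_tmul_iff hT ha3 ha4 s₁ t₁ t₂ (act s₂ t₃)
  constructor
  · rintro ⟨⟨h₂₃, h₂t₃, h₂u⟩, h₁₂₃, h₁, h₁'⟩
    obtain ⟨h₁₂, h₁₂₃'⟩ := (hS.1 s₁ s₂ s₃).mp ⟨h₂₃, h₁₂₃⟩
    obtain ⟨h₁t₂, h₁u, h₁₁₂, h₁₂u⟩ := hT'.mp ⟨h₂u, h₁, h₁'⟩
    have h₁₂t₃ := ((ha1 s₁ s₂ t₃).mpr ⟨h₂t₃, h₁u⟩).2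
    exact ⟨⟨h₁₂, h₁t₂, h₁₁₂⟩, h₁₂₃', h₁₂t₃, ha2 s₁ s₂ t₃ h₁₂ h₁₂t₃ ▸ h₁₂u⟩
  · rintro ⟨⟨h₁₂, h₁t₂, h₁₁₂⟩, h₁₂₃', h₁₂t₃, h₁₂u⟩
    obtain ⟨h₂₃, h₁₂₃⟩ := (hS.1 s₁ s₂ s₃).mpr ⟨h₁₂, h₁₂₃'⟩
    obtain ⟨h₂t₃, h₁u⟩ := (ha1 s₁ s₂ t₃).mp ⟨h₁₂, h₁₂t₃⟩
    rw [← ha2 s₁ s₂ t₃ h₁₂ h₁₂t₃] at h₁₂u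
    obtain ⟨h₂u, h₁, h₁'⟩ := hT'.mpr ⟨h₁t₂, h₁u, h₁₁₂, h₁₂u⟩
    exact ⟨⟨h₂₃, h₂t₃, h₂u⟩, h₁₂₃, h₁, h₁'⟩

theorem isPartialSemigroup_sdMul (hS : IsPartialSemigroup smul Ds)
    (hT : IsPartialSemigroup tmul Dt) :
    IsPartialSemigroup (sdMul smul tmul act) (sdD Ds Dt Da act) := by
  refine ⟨sdD_assoc_iff ha1 ha2 ha3 ha4 hS hT, ?_⟩
  rintro p q r hpq hpqr
  obtain ⟨⟨-, -, h₂u⟩, -, h₁, h₁'⟩ := (sdD_assoc_iff ha1 ha2 ha3 ha4 hS hT p q r).mpr ⟨hpq, hpqr⟩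
  obtain ⟨h₁₂, -, -⟩ := hpq
  obtain ⟨h₁₂₃, h₁₂t₃, -⟩ := hpqr
  refine Prod.ext (hS.2 _ _ _ h₁₂ h₁₂₃) ?_
  change tmul (tmul p.2 (act p.1 q.2)) (act (smul p.1 q.1) r.2) =
    tmul p.2 (act p.1 (tmul q.2 (act q.1 r.2)))
  rw [← ha2 _ _ _ h₁₂ h₁₂t₃, tmul_act_tmul_assoc hT ha3 ha4 h₂u h₁ h₁']

theorem isPartialMonoid_sdMul {Es : Set S} {Et : Set T}
    (hMS : IsPartialMonoid smul Ds Es) (hMT : IsPartialMonoid tmul Dt Et)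
    (hEs : ∀ e ∈ Es, ∀ t : T, Da e t ∧ act e t = t)
    (hEt : ∀ e ∈ Et, ∀ s : S, Da s e ∧ act s e = e) :
    IsPartialMonoid (sdMul smul tmul act) (sdD Ds Dt Da act) (Es ×ˢ Et) := by
  obtain ⟨hS, hSl, hSr, hSu⟩ := hMS
  obtain ⟨hT, hTl, hTr, hTu⟩ := hMT
  refine ⟨isPartialSemigroup_sdMul ha1 ha2 ha3 ha4 hS hT, ?_, ?_, ?_⟩
  · rintro ⟨s, t⟩
    obtain ⟨es, hes, hDs, hs⟩ := hSl s
    obtain ⟨et, het, hDt, ht⟩ := hTl t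
    obtain ⟨hDa, hact⟩ := hEs es hes t
    refine ⟨(es, et), ⟨hes, het⟩, ⟨hDs, hDa, by dsimp only; rwa [hact]⟩, ?_⟩
    simp only [sdMul, hs, hact, ht]
  · rintro ⟨s, t⟩
    obtain ⟨es, hes, hDs, hs⟩ := hSr s
    obtain ⟨et, het, hDt, ht⟩ := hTr t
    obtain ⟨hDa, hact⟩ := hEt et het s
    refine ⟨(es, et), ⟨hes, het⟩, ⟨hDs, hDa, by dsimp only; rwa [hact]⟩, ?_⟩
    simp only [sdMul, hs, hact, ht]
  · rintro ⟨e, f⟩ ⟨he, hf⟩ ⟨e', f'⟩ ⟨he', hf'⟩ ⟨hDs, -, hDt⟩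
    rw [(hEs e he f').2] at hDt
    exact Prod.ext (hSu e he e' he' hDs) (hTu f hf f' hf' hDt)

end SemidirectProduct

theorem semidirect_product_partial_semigroup {S T : Type*}
    (smul : S → S → S) (Ds : S → S → Prop)
    (tmul : T → T → T) (Dt : T → T → Prop)
    (act : S → T → T) (Da : S → T → Prop)
    (hS : IsPartialSemigroup smul Ds) (hT : IsPartialSemigroup tmul Dt)
    (ha1 : ∀ s₁ s₂ t, (Ds s₁ s₂ ∧ Da (smul s₁ s₂) t) ↔ (Da s₂ t ∧ Da s₁ (act s₂ t)))
    (ha2 : ∀ s₁ s₂ t, Ds s₁ s₂ → Da (smul s₁ s₂) t →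
      act s₁ (act s₂ t) = act (smul s₁ s₂) t)
    (ha3 : ∀ s t₁ t₂, (Dt t₁ t₂ ∧ Da s (tmul t₁ t₂)) ↔
      (Da s t₁ ∧ Da s t₂ ∧ Dt (act s t₁) (act s t₂)))
    (ha4 : ∀ s t₁ t₂, Dt t₁ t₂ → Da s (tmul t₁ t₂) →
      tmul (act s t₁) (act s t₂) = act s (tmul t₁ t₂)) :
    IsPartialSemigroup (sdMul smul tmul act) (sdD Ds Dt Da act) ∧
    (∀ (Es : Set S) (Et : Set T),
      IsPartialMonoid smul Ds Es → IsPartialMonoid tmul Dt Et →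
      (∀ e ∈ Es, ∀ t : T, Da e t ∧ act e t = t) →
      (∀ e ∈ Et, ∀ s : S, Da s e ∧ act s e = e) →
      IsPartialMonoid (sdMul smul tmul act) (sdD Ds Dt Da act) (Es ×ˢ Et)) :=
  ⟨isPartialSemigroup_sdMul ha1 ha2 ha3 ha4 hS hT,
    fun _ _ hMS hMT hEs hEt => isPartialMonoid_sdMul ha1 ha2 ha3 ha4 hMS hMT hEs hEt⟩
end

section
/- Let Q be a quantale, L a complete lattice, and ∘ : Q → L → L a quantale module action, i.e. (u * v) ∘ x = u ∘ (v ∘ x), (⨆ V) ∘ x = ⨆ {v ∘ x | v ∈ V} and u ∘ (⨆ X) = ⨆ {u ∘ x | x ∈ X} for all u, v ∈ Q, x ∈ L, V ⊆ Q, X ⊆ L. Define on Q × L (with the product complete lattice structure) the operation (u, x) ⋉ (v, y) = (u * v, x ⊔ u ∘ y). Then: (1) ⋉ is associative; (2) (⨆ A) ⋉ p = ⨆ {a ⋉ p | a ∈ A} for every subset A ⊆ Q × L and p ∈ Q × L; (3) p ⋉ (⨆ B) = ⨆ {p ⋉ b | b ∈ B} for every nonempty subset B ⊆ Q × L; and (4)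 if Q is unital with unit 1 and 1 ∘ x = x for all x ∈ L, then (1, ⊥) is a two-sided unit for ⋉. That is, Q ⋉ L is a weak (unital) quantale. -/
/-- Semidirect composition on `Q × L`: `(u, x) ⋉ (v, y) = (u * v, x ⊔ u ∘ y)`. -/
def sd {Q L : Type*} [Mul Q] [Lattice L] (act : Q → L → L) (p q : Q × L) : Q × L :=
  (p.1 * q.1, p.2 ⊔ act p.1 q.2)

section Semidirect

variable {Q L : Type*}

theorem map_sup_of_map_sSup {α β : Type*} [CompleteLattice α] [CompleteLattice β] {f : α → β}
    (hf : ∀ X : Set α, f (sSup X) = ⨆ x ∈ X, f x) (x y : α) : f (x ⊔ y) = f x ⊔ f y := by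
  rw [← sSup_pair, hf, iSup_pair]

theorem map_bot_of_map_sSup {α β : Type*} [CompleteLattice α] [CompleteLattice β] {f : α → β}
    (hf : ∀ X : Set α, f (sSup X) = ⨆ x ∈ X, f x) : f ⊥ = ⊥ := by
  simpa using hf ∅

theorem sd_assoc [Mul Q] [Lattice L] {act : Q → L → L}
    (mul_assoc : ∀ a b c : Q, a * b * c = a * (b * c))
    (hact_assoc : ∀ (u v : Q) (x : L), act (u * v) x = act u (act v x))
    (hact_sup : ∀ (u : Q) (x y : L), act u (x ⊔ y) = act u x ⊔ act u y) (p q r : Q × L) :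
    sd act (sd act p q) r = sd act p (sd act q r) := by
  simp only [sd, mul_assoc, hact_assoc, hact_sup, sup_assoc]

theorem sd_sSup_left [CompleteLattice Q] [Mul Q] [CompleteLattice L] {act : Q → L → L}
    (hdistl : ∀ (A : Set Q) (b : Q), sSup A * b = ⨆ a ∈ A, a * b)
    (hact_sup : ∀ (V : Set Q) (x : L), act (sSup V) x = ⨆ v ∈ V, act v x)
    (A : Set (Q × L)) (p : Q × L) : sd act (sSup A) p = ⨆ a ∈ A, sd act a p := by
  ext
  · simp only [sd, Prod.fst_sSup, Prod.fst_iSup, hdistl, iSup_image]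
  · simp only [sd, Prod.snd_sSup, Prod.fst_sSup, Prod.snd_iSup]
    rw [hact_sup, sSup_image, iSup_image]
    simp only [iSup_subtype']
    exact iSup_sup_eq.symm

-- Nonemptiness is needed because `p.2 ⊔ ·` does not preserve the empty join.
theorem sd_sSup_right [CompleteLattice Q] [Mul Q] [CompleteLattice L] {act : Q → L → L}
    (hdistr : ∀ (a : Q) (B : Set Q), a * sSup B = ⨆ b ∈ B, a * b)
    (hact_sup : ∀ (u : Q) (X : Set L), act u (sSup X) = ⨆ x ∈ X, act u x)
    (p : Q × L) {B : Set (Q × L)} (hB : B.Nonempty) :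
    sd act p (sSup B) = ⨆ b ∈ B, sd act p b := by
  ext
  · simp only [sd, Prod.fst_sSup, Prod.fst_iSup, hdistr, iSup_image]
  · simp only [sd, Prod.snd_sSup, Prod.snd_iSup, hact_sup, iSup_image]
    exact sup_biSup hB

theorem one_bot_sd [Mul Q] [One Q] [Lattice L] [OrderBot L] {act : Q → L → L}
    (one_mul : ∀ a : Q, 1 * a = a) (hact_one : ∀ x : L, act 1 x = x) (p : Q × L) :
    sd act (1, ⊥) p = p := by
  simp [sd, one_mul, hact_one]

theorem sd_one_bot [Mul Q] [One Q] [Lattice L] [OrderBot L] {act : Q → L → L}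
    (mul_one : ∀ a : Q, a * 1 = a) (hact_bot : ∀ u : Q, act u ⊥ = ⊥) (p : Q × L) :
    sd act p (1, ⊥) = p := by
  simp [sd, mul_one, hact_bot]

end Semidirect

theorem quantale_module_semidirect {Q L : Type*}
    [CompleteLattice Q] [Mul Q] [One Q] [CompleteLattice L]
    (mul_assoc : ∀ a b c : Q, a * b * c = a * (b * c))
    (hdistl : ∀ (A : Set Q) (b : Q), sSup A * b = ⨆ a ∈ A, a * b)
    (hdistr : ∀ (a : Q) (B : Set Q), a * sSup B = ⨆ b ∈ B, a * b)
    (act : Q → L → L)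
    (hact_assoc : ∀ (u v : Q) (x : L), act (u * v) x = act u (act v x))
    (hact_sup₁ : ∀ (V : Set Q) (x : L), act (sSup V) x = ⨆ v ∈ V, act v x)
    (hact_sup₂ : ∀ (u : Q) (X : Set L), act u (sSup X) = ⨆ x ∈ X, act u x) :
    (∀ p q r : Q × L, sd act (sd act p q) r = sd act p (sd act q r)) ∧
    (∀ (A : Set (Q × L)) (p : Q × L), sd act (sSup A) p = ⨆ a ∈ A, sd act a p) ∧
    (∀ (p : Q × L) (B : Set (Q × L)), B.Nonempty →
      sd act p (sSup B) = ⨆ b ∈ B, sd act p b) ∧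
    ((∀ a : Q, 1 * a = a) → (∀ a : Q, a * 1 = a) → (∀ x : L, act 1 x = x) →
      ∀ p : Q × L, sd act ((1 : Q), (⊥ : L)) p = p ∧ sd act p ((1 : Q), (⊥ : L)) = p) :=
  ⟨sd_assoc mul_assoc hact_assoc fun u => map_sup_of_map_sSup (hact_sup₂ u),
    sd_sSup_left hdistl hact_sup₁,
    fun p _ hB => sd_sSup_right hdistr hact_sup₂ p hB,
    fun one_mul mul_one hact_one p =>
      ⟨one_bot_sd one_mul hact_one p,
        sd_one_bot mul_one (fun u => map_bot_of_map_sSup (hact_sup₂ u)) p⟩⟩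
end

section
/- Let S(ℝ) = {(i, j) ∈ ℝ × ℝ | i ≤ j} be the set of closed real segments. For f, g : S(ℝ) → ℝ≥0∞ define the min-plus convolution (f ∗ g) (i, j) = ⨅ {f (i, k) + g (k, j) | i ≤ k ∧ k ≤ j}, and define e : S(ℝ) → ℝ≥0∞ by e (i, j) = 0 if i = j and e (i, j) = ⊤ (= ∞) otherwise. Then ∗ is associative, and e is a two-sided unit: e ∗ f = f = f ∗ e for all f : S(ℝ) → ℝ≥0∞. -/
open scoped ENNReal Classical

/-- The closed real segments: pairs `(i, j)` of reals with `i ≤ j`. -/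
def RSeg : Type := {p : ℝ × ℝ // p.1 ≤ p.2}

/-- Min-plus convolution on the incidence algebra of real segments:
`(f ∗ g) (i, j) = ⨅ {f (i, k) + g (k, j) | i ≤ k ≤ j}`. -/
noncomputable def mconv (f g : RSeg → ℝ≥0∞) : RSeg → ℝ≥0∞ :=
  fun s => ⨅ (k : ℝ) (h : s.val.1 ≤ k ∧ k ≤ s.val.2),
    f ⟨(s.val.1, k), h.1⟩ + g ⟨(k, s.val.2), h.2⟩

/-- The unit: `0` on point segments, `⊤ = ∞` elsewhere. -/
noncomputable def munit : RSeg → ℝ≥0∞ :=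
  fun s => if s.val.1 = s.val.2 then 0 else ⊤

/-!
Both iterated convolutions evaluate at `(i, j)` to the infimum of
`f (i, k) + g (k, m) + h (m, j)` over `i ≤ k ≤ m ≤ j`, because addition on `ℝ≥0∞` distributes
over infima. In `e ∗ f` only the split point `k = i` gives a finite value of `e`, and in
`f ∗ e` only `k = j`.
-/

section Convolution

variable (f g : RSeg → ℝ≥0∞)

theorem mconv_le {i k j : ℝ} (hik : i ≤ k) (hkj : k ≤ j) :
    mconv f g ⟨(i, j), hik.trans hkj⟩ ≤ f ⟨(i, k), hik⟩ + g ⟨(k, j), hkj⟩ :=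
  iInf₂_le k ⟨hik, hkj⟩

variable {f g}

theorem le_mconv_iff {i j : ℝ} {hij : i ≤ j} {a : ℝ≥0∞} :
    a ≤ mconv f g ⟨(i, j), hij⟩ ↔ ∀ k (h : i ≤ k ∧ k ≤ j),
      a ≤ f ⟨(i, k), h.1⟩ + g ⟨(k, j), h.2⟩ :=
  le_iInf₂_iff

theorem le_add_mconv_iff {i j : ℝ} {hij : i ≤ j} {a c : ℝ≥0∞} :
    a ≤ c + mconv f g ⟨(i, j), hij⟩ ↔ ∀ k (h : i ≤ k ∧ k ≤ j),
      a ≤ c + (f ⟨(i, k), h.1⟩ + g ⟨(k, j), h.2⟩) := by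
  simp only [mconv, ENNReal.add_iInf, le_iInf₂_iff]

theorem le_mconv_add_iff {i j : ℝ} {hij : i ≤ j} {a c : ℝ≥0∞} :
    a ≤ mconv f g ⟨(i, j), hij⟩ + c ↔ ∀ k (h : i ≤ k ∧ k ≤ j),
      a ≤ f ⟨(i, k), h.1⟩ + g ⟨(k, j), h.2⟩ + c := by
  simp only [mconv, ENNReal.iInf_add, le_iInf₂_iff]

theorem mconv_assoc (h : RSeg → ℝ≥0∞) : mconv (mconv f g) h = mconv f (mconv g h) := by
  funext s
  obtain ⟨⟨i, j⟩, hij⟩ := s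
  apply le_antisymm
  · refine le_mconv_iff.2 fun k hk => le_add_mconv_iff.2 fun m hm => ?_
    calc mconv (mconv f g) h ⟨(i, j), hij⟩
        ≤ mconv f g ⟨(i, m), hk.1.trans hm.1⟩ + h ⟨(m, j), hm.2⟩ := mconv_le _ _ _ _
      _ ≤ f ⟨(i, k), hk.1⟩ + g ⟨(k, m), hm.1⟩ + h ⟨(m, j), hm.2⟩ :=
          add_le_add_left (mconv_le _ _ _ _) _
      _ = _ := add_assoc _ _ _
  · refine le_mconv_iff.2 fun m hm => le_mconv_add_iff.2 fun k hk => ?_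
    calc mconv f (mconv g h) ⟨(i, j), hij⟩
        ≤ f ⟨(i, k), hk.1⟩ + mconv g h ⟨(k, j), hk.2.trans hm.2⟩ := mconv_le _ _ _ _
      _ ≤ f ⟨(i, k), hk.1⟩ + (g ⟨(k, m), hk.2⟩ + h ⟨(m, j), hm.2⟩) :=
          add_le_add_right (mconv_le _ _ _ _) _
      _ = _ := (add_assoc _ _ _).symm

end Convolution

section Unit

theorem munit_self (i : ℝ) : munit ⟨(i, i), le_rfl⟩ = 0 := if_pos rfl

theorem munit_of_ne {i j : ℝ} (hij : i ≤ j) (h : i ≠ j) : munit ⟨(i, j), hij⟩ = ⊤ := if_neg h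

variable (f : RSeg → ℝ≥0∞)

theorem munit_mconv : mconv munit f = f := by
  funext s
  obtain ⟨⟨i, j⟩, hij⟩ := s
  apply le_antisymm
  · simpa only [munit_self, zero_add] using mconv_le munit f le_rfl hij
  · refine le_mconv_iff.2 fun k hk => ?_
    by_cases hik : i = k
    · subst hik
      rw [munit_self, zero_add]
    · rw [munit_of_ne hk.1 hik, top_add]
      exact le_top

theorem mconv_munit : mconv f munit = f := by
  funext s
  obtain ⟨⟨i, j⟩, hij⟩ := s
  apply le_antisymm
  · simpa only [munit_self, add_zero] using mconv_le f munit hij le_rfl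
  · refine le_mconv_iff.2 fun k hk => ?_
    by_cases hkj : k = j
    · subst hkj
      rw [munit_self, add_zero]
    · rw [munit_of_ne hk.2 hkj, add_top]
      exact le_top

end Unit

theorem duration_quantale :
    (∀ f g h : RSeg → ℝ≥0∞, mconv (mconv f g) h = mconv f (mconv g h)) ∧
    (∀ f : RSeg → ℝ≥0∞, mconv munit f = f ∧ mconv f munit = f) :=
  ⟨fun _ _ _ => mconv_assoc _, fun f => ⟨munit_mconv f, mconv_munit f⟩⟩
end
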